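/- Let E be a real normed vector space, x₀, ε ∈ E, N ∈ ℕ, and let α : Fin (N+1) → ℝ be any schedule with α i ∈ (0,1) for all i (not required to be monotonic). Define the trajectory x : Fin (N+1) → E by x 0 := √(α 0)·x₀ + √(1−α 0)·ε and, for each i, x (i+1) := √(α (i+1))·x̂₀ + √(1−α (i+1))·ε̃, where x̂₀ := (x i − √(1−α i)·ε_pred)/√(α i) with oracle noise prediction ε_pred := (x i − √(α i)·x₀)/√(1−α i), and ε̃ := (x i − √(α i)·x̂₀)/√(1−α i). Then for every i, x i = √(α i)·x₀ + √(1−α i)·ε; in particular the final state x N = √(α N)·x₀ + √(1−α N)·ε depends only on the endpoint noise level α N and not on the intermediate schedule, whether monotonic or containing reheat steps. -/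

import Mathlib

/-! With the oracle predictor the predicted clean image is exactly `x₀`, so a DDIM step
from level `a` to `a'` keeps the noise `(y − √a • x₀)/√(1 − a)` carried by the state and
only re-weights it. A state `√a • x₀ + √(1 − a) • ε` therefore carries the noise `ε`, and
by induction along the schedule every state of the trajectory has this form. -/

/-- One deterministic DDIM update from level `a` to level `a'`, where the
predicted clean image `x̂₀ := (y − √(1−a)·ε_pred)/√a` is computed from the
oracle noise prediction `ε_pred := (y − √a·x₀)/√(1−a)`, and the noise is
recomputed as `ε̃ := (y − √a·x̂₀)/√(1−a)`. -/
noncomputable def ddimOracleStep {E : Type*} [NormedAddCommGroup E] [NormedSpace ℝ E]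
    (x₀ : E) (a a' : ℝ) (y : E) : E :=
  let εpred : E := (Real.sqrt (1 - a))⁻¹ • (y - Real.sqrt a • x₀)
  let xhat : E := (Real.sqrt a)⁻¹ • (y - Real.sqrt (1 - a) • εpred)
  let εtil : E := (Real.sqrt (1 - a))⁻¹ • (y - Real.sqrt a • xhat)
  Real.sqrt a' • xhat + Real.sqrt (1 - a') • εtil

section

variable {E : Type*} [NormedAddCommGroup E] [NormedSpace ℝ E]

noncomputable def oracleNoise (x₀ : E) (a : ℝ) (y : E) : E :=
  (Real.sqrt (1 - a))⁻¹ • (y - Real.sqrt a • x₀)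

noncomputable def forwardNoised (x₀ ε : E) (a : ℝ) : E :=
  Real.sqrt a • x₀ + Real.sqrt (1 - a) • ε

theorem ddimOracleStep_eq {x₀ : E} {a : ℝ} (a' : ℝ) (y : E) (ha₀ : 0 < a) (ha₁ : a < 1) :
    ddimOracleStep x₀ a a' y = forwardNoised x₀ (oracleNoise x₀ a y) a' := by
  have hpred : Real.sqrt (1 - a) • oracleNoise x₀ a y = y - Real.sqrt a • x₀ :=
    smul_inv_smul₀ (Real.sqrt_pos.2 (sub_pos.2 ha₁)).ne' _
  have hxhat : (Real.sqrt a)⁻¹ • (y - Real.sqrt (1 - a) • oracleNoise x₀ a y) = x₀ := by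
    rw [hpred, sub_sub_cancel, inv_smul_smul₀ (Real.sqrt_pos.2 ha₀).ne']
  dsimp only [ddimOracleStep]
  rw [← oracleNoise, hxhat, ← oracleNoise, forwardNoised]

theorem oracleNoise_forwardNoised (x₀ ε : E) {a : ℝ} (ha : a < 1) :
    oracleNoise x₀ a (forwardNoised x₀ ε a) = ε := by
  have hs : Real.sqrt (1 - a) ≠ 0 := (Real.sqrt_pos.2 (sub_pos.2 ha)).ne'
  rw [oracleNoise, forwardNoised, add_sub_cancel_left, inv_smul_smul₀ hs]

theorem ddimOracleStep_forwardNoised (x₀ ε : E) {a : ℝ} (a' : ℝ) (ha₀ : 0 < a) (ha₁ : a < 1) :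
    ddimOracleStep x₀ a a' (forwardNoised x₀ ε a) = forwardNoised x₀ ε a' := by
  rw [ddimOracleStep_eq a' _ ha₀ ha₁, oracleNoise_forwardNoised x₀ ε ha₁]

end

/-- Along any (not necessarily monotonic) schedule `α` with values in `(0,1)`,
the deterministic DDIM trajectory driven by the oracle noise predictor satisfies
`x i = √(α i) • x₀ + √(1 − α i) • ε` at every index; in particular the final
state depends only on the endpoint noise level `α N`, not on the intermediate
schedule (whether monotonic or containing reheat steps). -/
theorem ddim_oracle_trajectory_schedule_independent
    {E : Type*} [NormedAddCommGroup E] [NormedSpace ℝ E]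
    (x₀ ε : E) (N : ℕ) (α : Fin (N + 1) → ℝ)
    (hα : ∀ i, 0 < α i ∧ α i < 1)
    (x : Fin (N + 1) → E)
    (hx0 : x 0 = Real.sqrt (α 0) • x₀ + Real.sqrt (1 - α 0) • ε)
    (hstep : ∀ i : Fin N,
      x i.succ = ddimOracleStep x₀ (α i.castSucc) (α i.succ) (x i.castSucc)) :
    (∀ i : Fin (N + 1), x i = Real.sqrt (α i) • x₀ + Real.sqrt (1 - α i) • ε) ∧
    x (Fin.last N) =
      Real.sqrt (α (Fin.last N)) • x₀ + Real.sqrt (1 - α (Fin.last N)) • ε := by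
  have h : ∀ i, x i = forwardNoised x₀ ε (α i) := by
    intro i
    induction i using Fin.induction with
    | zero => exact hx0
    | succ i ih =>
      rw [hstep i, ih]
      exact ddimOracleStep_forwardNoised x₀ ε _ (hα i.castSucc).1 (hα i.castSucc).2
  exact ⟨h, h _⟩
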